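/- Let μ be a Borel probability measure on ℝⁿ, I an interval of ℝ, Φ a C² convex function on I, D : ℝⁿ → (symmetric positive semidefinite n×n matrices), and C > 0. Assume the Φ-entropy inequality: for every C¹ I-valued function h with h, Φ(h) μ-integrable, Ent^Φ_μ(h) ≤ C ∫ Φ''(h(x)) ⟨∇h(x), D(x) ∇h(x)⟩ dμ(x). Let v : [0,∞) × ℝⁿ → I, with each v_t of class C¹ and v_t, Φ(v_t) μ-integrable, be such that H(t) = Ent^Φ_μ(v_t) is differentiable on [0,∞) with H'(t) = − ∫ Φ''(v_t(x)) ⟨∇v_t(x), D(x) ∇v_t(x)⟩ dμ(x) for all t ≥ 0. Then H(t) ≤ e^{−t/C} H(0) for all t ≥ 0; in particular, if v_t = u_t/u_∞ for a solution (u_t) of the Fokker–Planck equation with stationary state u_∞ = dμ/dx, the solution converges to u_∞ exponentially fast in Φ-entropy. -/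

import Mathlib

open MeasureTheory Matrix

/-- Partial derivative `∂h/∂x_i` of `h : ℝⁿ → ℝ` at `x`. -/
noncomputable def pd {n : ℕ} (i : Fin n) (h : (Fin n → ℝ) → ℝ) (x : Fin n → ℝ) : ℝ :=
  fderiv ℝ h x (Pi.single i 1)

/-- The carré du champ `Γ(h)(x) = ⟨∇h(x), D(x) ∇h(x)⟩` associated to the diffusion
matrix `D`. -/
noncomputable def gamD {n : ℕ} (D : (Fin n → ℝ) → Matrix (Fin n) (Fin n) ℝ)
    (h : (Fin n → ℝ) → ℝ) (x : Fin n → ℝ) : ℝ :=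
  (fun i => pd i h x) ⬝ᵥ (D x).mulVec fun i => pd i h x

/-! The Φ-entropy inequality bounds `H t` by `C` times the dissipation `-H' t`, so
`H' ≤ -H / C`; hence `e^{t/C} H t` is antitone on `[0, ∞)` (linear Grönwall). -/

open Set Real

theorem antitoneOn_exp_neg_mul_mul_of_hasDerivWithinAt_le {s : Set ℝ} (hs : Convex ℝ s)
    {f f' : ℝ → ℝ} {K : ℝ} (hf : ∀ t ∈ s, HasDerivWithinAt f (f' t) s t)
    (hf' : ∀ t ∈ interior s, f' t ≤ K * f t) :
    AntitoneOn (fun t => exp (-K * t) * f t) s := by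
  have hexp (t : ℝ) : HasDerivAt (fun t => exp (-K * t)) (exp (-K * t) * -K) t := by
    simpa using ((hasDerivAt_id t).const_mul (-K)).exp
  refine antitoneOn_of_hasDerivWithinAt_nonpos hs
    (f' := fun t => exp (-K * t) * -K * f t + exp (-K * t) * f' t)
    (fun t ht => ((hexp t).hasDerivWithinAt.mul (hf t ht)).continuousWithinAt)
    (fun t ht => ?_) (fun t ht => ?_)
  · exact ((hexp t).mul ((hf t (interior_subset ht)).hasDerivAt
      (mem_interior_iff_mem_nhds.1 ht))).hasDerivWithinAt
  · have := mul_le_mul_of_nonneg_left (hf' t ht) (exp_pos (-K * t)).le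
    linarith

theorem le_exp_mul_mul_of_hasDerivWithinAt_le {f f' : ℝ → ℝ} {K : ℝ}
    (hf : ∀ t ≥ 0, HasDerivWithinAt f (f' t) (Ici 0) t) (hf' : ∀ t > 0, f' t ≤ K * f t)
    {t : ℝ} (ht : 0 ≤ t) : f t ≤ exp (K * t) * f 0 := by
  have hanti := antitoneOn_exp_neg_mul_mul_of_hasDerivWithinAt_le (convex_Ici 0) hf
    (by simpa using hf') self_mem_Ici ht ht
  have hK : exp (K * t) * exp (-K * t) = 1 := by rw [← exp_add]; simp
  simp only [mul_zero, exp_zero, one_mul] at hanti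
  calc f t = exp (K * t) * (exp (-K * t) * f t) := by rw [← mul_assoc, hK, one_mul]
    _ ≤ exp (K * t) * f 0 := by gcongr

theorem phi_entropy_exponential_decay_general
    {n : ℕ} (μ : Measure (Fin n → ℝ))
    (I : Set ℝ) (Φ : ℝ → ℝ)
    (D : (Fin n → ℝ) → Matrix (Fin n) (Fin n) ℝ)
    (C : ℝ) (hC : 0 < C)
    (hPhiIneq : ∀ h : (Fin n → ℝ) → ℝ, ContDiff ℝ 1 h → (∀ x, h x ∈ I) →
      Integrable h μ → Integrable (fun x => Φ (h x)) μ →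
      (∫ x, Φ (h x) ∂μ) - Φ (∫ x, h x ∂μ) ≤
        C * ∫ x, deriv (deriv Φ) (h x) * gamD D h x ∂μ)
    (v : ℝ → (Fin n → ℝ) → ℝ)
    (hvreg : ∀ t ≥ (0 : ℝ), ContDiff ℝ 1 (v t))
    (hvI : ∀ t ≥ (0 : ℝ), ∀ x, v t x ∈ I)
    (hvint : ∀ t ≥ (0 : ℝ), Integrable (v t) μ)
    (hΦvint : ∀ t ≥ (0 : ℝ), Integrable (fun x => Φ (v t x)) μ)
    (H : ℝ → ℝ)
    (hH : ∀ t ≥ (0 : ℝ), H t = (∫ x, Φ (v t x) ∂μ) - Φ (∫ x, v t x ∂μ))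
    (hH' : ∀ t ≥ (0 : ℝ),
      HasDerivWithinAt H (-∫ x, deriv (deriv Φ) (v t x) * gamD D (v t) x ∂μ)
        (Set.Ici (0 : ℝ)) t) :
    ∀ t ≥ (0 : ℝ), H t ≤ Real.exp (-t / C) * H 0 := by
  have hdecay : ∀ t > 0, -∫ x, deriv (deriv Φ) (v t x) * gamD D (v t) x ∂μ ≤ -C⁻¹ * H t := by
    intro t ht
    have hent : H t ≤ C * ∫ x, deriv (deriv Φ) (v t x) * gamD D (v t) x ∂μ := by
      rw [hH t ht.le]
      exact hPhiIneq (v t) (hvreg t ht.le) (hvI t ht.le) (hvint t ht.le) (hΦvint t ht.le)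
    rw [neg_mul, neg_le_neg_iff, inv_mul_le_iff₀ hC]
    exact hent
  intro t ht
  simpa only [neg_mul, ← neg_div, inv_mul_eq_div] using
    le_exp_mul_mul_of_hasDerivWithinAt_le hH' hdecay ht

/-- Let `μ` be a Borel probability measure on `ℝⁿ`, `I` an interval of `ℝ`
(i.e. a convex subset), `Φ` a `C²` convex function on `I`, `D(x)` symmetric positive
semidefinite matrices, and `C > 0`.  Assume the `Φ`-entropy inequality
`Ent^Φ_μ(h) ≤ C ∫ Φ''(h) ⟨∇h, D ∇h⟩ dμ` for every `C¹` `I`-valued `h` with `h, Φ(h)`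
`μ`-integrable.  Let `v : [0,∞) × ℝⁿ → I`, each `v t` being `C¹` with `v t, Φ(v t)`
`μ`-integrable, be such that `H(t) = Ent^Φ_μ(v t)` is differentiable on `[0,∞)` with
`H'(t) = −∫ Φ''(v t) ⟨∇v t, D ∇v t⟩ dμ` for all `t ≥ 0`.  Then `H(t) ≤ e^{−t/C} H(0)` for
all `t ≥ 0`. -/
theorem phi_entropy_exponential_decay
    {n : ℕ} (μ : Measure (Fin n → ℝ)) [IsProbabilityMeasure μ]
    (I : Set ℝ) (Φ : ℝ → ℝ) (hΦreg : ContDiff ℝ 2 Φ) (hΦ : ConvexOn ℝ I Φ)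
    (D : (Fin n → ℝ) → Matrix (Fin n) (Fin n) ℝ)
    (hDsymm : ∀ x, (D x).IsSymm) (hDpos : ∀ x, (D x).PosSemidef)
    (C : ℝ) (hC : 0 < C)
    (hPhiIneq : ∀ h : (Fin n → ℝ) → ℝ, ContDiff ℝ 1 h → (∀ x, h x ∈ I) →
      Integrable h μ → Integrable (fun x => Φ (h x)) μ →
      (∫ x, Φ (h x) ∂μ) - Φ (∫ x, h x ∂μ) ≤
        C * ∫ x, deriv (deriv Φ) (h x) * gamD D h x ∂μ)
    (v : ℝ → (Fin n → ℝ) → ℝ)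
    (hvreg : ∀ t ≥ (0 : ℝ), ContDiff ℝ 1 (v t))
    (hvI : ∀ t ≥ (0 : ℝ), ∀ x, v t x ∈ I)
    (hvint : ∀ t ≥ (0 : ℝ), Integrable (v t) μ)
    (hΦvint : ∀ t ≥ (0 : ℝ), Integrable (fun x => Φ (v t x)) μ)
    (H : ℝ → ℝ)
    (hH : ∀ t ≥ (0 : ℝ), H t = (∫ x, Φ (v t x) ∂μ) - Φ (∫ x, v t x ∂μ))
    (hH' : ∀ t ≥ (0 : ℝ),
      HasDerivWithinAt H (-∫ x, deriv (deriv Φ) (v t x) * gamD D (v t) x ∂μ)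
        (Set.Ici (0 : ℝ)) t) :
    ∀ t ≥ (0 : ℝ), H t ≤ Real.exp (-t / C) * H 0 :=
  phi_entropy_exponential_decay_general μ I Φ D C hC hPhiIneq v hvreg hvI hvint hΦvint H hH hH'
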